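/- arXiv:1209.5457 — 8 statements merged into one kernel-verified Lean document; each statement's English description precedes it below -/
import Mathlib

section
/- Let G = {1, σ} be the cyclic group of order 2 acting on a finitely generated free abelian group Λ. Then there exist nonnegative integers r0, r+, r− and an isomorphism of G-modules Λ ≅ ℤ[G]^{r0} ⊕ ℤ_+^{r+} ⊕ ℤ_−^{r−}; in particular rk(Λ) = 2·r0 + r+ + r−. -/
/-!
Let `N = ker (σ + 1)` and `Q = im (σ + 1)`. Since `Q` is free, `0 → N → Λ → Q → 0` splits,
and in a splitting `σ` becomes `(n, q) ↦ (-n + F q, q)` for a linear map `F : Q → N`.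
Smith normal form of `F` cuts this into copies of `ℤ₋`, `ℤ₊` and rank-two blocks
`(u, v) ↦ (-u + a v, v)`. The shear `u ↦ u - c v` replaces `a` by `a - 2c`, so a block is
`ℤ₋ ⊕ ℤ₊` for even `a` and `ℤ[G]` for odd `a`.
-/

open LinearMap Function

section StdDecomposition

variable {M M' : Type*} [AddCommGroup M] [AddCommGroup M']

def stdInvolution {ι0 ιp ιm : Type*} (v : (ι0 → ℤ × ℤ) × (ιp → ℤ) × (ιm → ℤ)) :
    (ι0 → ℤ × ℤ) × (ιp → ℤ) × (ιm → ℤ) :=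
  (fun i => (v.1 i).swap, v.2.1, -v.2.2)

def HasStdDecomposition (σ : M → M) : Prop :=
  ∃ (ι0 ιp ιm : Type) (_ : Finite ι0) (_ : Finite ιp) (_ : Finite ιm)
    (e : M ≃+ (ι0 → ℤ × ℤ) × (ιp → ℤ) × (ιm → ℤ)), ∀ x, e (σ x) = stdInvolution (e x)

theorem HasStdDecomposition.of_addEquiv {σ : M → M} {τ : M' → M'} (φ : M ≃+ M')
    (hφ : ∀ x, φ (σ x) = τ (φ x)) (hτ : HasStdDecomposition τ) : HasStdDecomposition σ := by
  obtain ⟨ι0, ιp, ιm, h0, hp, hm, e, he⟩ := hτ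
  exact ⟨ι0, ιp, ιm, h0, hp, hm, φ.trans e, fun x => by simp [hφ, he]⟩

theorem hasStdDecomposition_swap : HasStdDecomposition (Prod.swap : ℤ × ℤ → ℤ × ℤ) :=
  ⟨Unit, Empty, Empty, inferInstance, inferInstance, inferInstance,
    { toFun := fun x => (fun _ => x, 0, 0)
      invFun := fun v => v.1 ()
      left_inv := fun _ => rfl
      right_inv := fun _ => Prod.ext rfl (Subsingleton.elim _ _)
      map_add' := fun _ _ => Prod.ext rfl (Subsingleton.elim _ _) }, fun _ => rfl⟩

theorem hasStdDecomposition_id : HasStdDecomposition (id : ℤ → ℤ) :=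
  ⟨Empty, Unit, Empty, inferInstance, inferInstance, inferInstance,
    { toFun := fun x => (0, fun _ => x, 0)
      invFun := fun v => v.2.1 ()
      left_inv := fun _ => rfl
      right_inv := fun _ =>
        Prod.ext (Subsingleton.elim _ _) (Prod.ext rfl (Subsingleton.elim _ _))
      map_add' := fun _ _ =>
        Prod.ext (Subsingleton.elim _ _) (Prod.ext rfl (Subsingleton.elim _ _)) },
    fun _ => Prod.ext (Subsingleton.elim _ _) (Prod.ext rfl (Subsingleton.elim _ _))⟩

theorem hasStdDecomposition_neg : HasStdDecomposition (Neg.neg : ℤ → ℤ) :=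
  ⟨Empty, Empty, Unit, inferInstance, inferInstance, inferInstance,
    { toFun := fun x => (0, 0, fun _ => x)
      invFun := fun v => v.2.2 ()
      left_inv := fun _ => rfl
      right_inv := fun _ =>
        Prod.ext (Subsingleton.elim _ _) (Prod.ext (Subsingleton.elim _ _) rfl)
      map_add' := fun _ _ =>
        Prod.ext (Subsingleton.elim _ _) (Prod.ext (Subsingleton.elim _ _) rfl) },
    fun _ => Prod.ext (Subsingleton.elim _ _) (Prod.ext (Subsingleton.elim _ _) rfl)⟩

theorem HasStdDecomposition.prodMap {σ : M → M} {τ : M' → M'} (hσ : HasStdDecomposition σ)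
    (hτ : HasStdDecomposition τ) : HasStdDecomposition (Prod.map σ τ) := by
  obtain ⟨ι0, ιp, ιm, _, _, _, e, he⟩ := hσ
  obtain ⟨κ0, κp, κm, _, _, _, e', he'⟩ := hτ
  let regroup :
      ((ι0 → ℤ × ℤ) × (ιp → ℤ) × (ιm → ℤ)) × ((κ0 → ℤ × ℤ) × (κp → ℤ) × (κm → ℤ)) ≃+
        (ι0 ⊕ κ0 → ℤ × ℤ) × (ιp ⊕ κp → ℤ) × (ιm ⊕ κm → ℤ) :=
    { toFun := fun v =>
        (Sum.elim v.1.1 v.2.1, Sum.elim v.1.2.1 v.2.2.1, Sum.elim v.1.2.2 v.2.2.2)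
      invFun := fun w => ((w.1 ∘ .inl, w.2.1 ∘ .inl, w.2.2 ∘ .inl),
        (w.1 ∘ .inr, w.2.1 ∘ .inr, w.2.2 ∘ .inr))
      left_inv := fun _ => rfl
      right_inv := fun w => by ext (_ | _) <;> rfl
      map_add' := fun v w => by ext (_ | _) <;> rfl }
  refine ⟨ι0 ⊕ κ0, ιp ⊕ κp, ιm ⊕ κm, inferInstance, inferInstance, inferInstance,
    (e.prodCongr e').trans regroup, fun x => ?_⟩
  have hx : e.prodCongr e' (Prod.map σ τ x) =
      Prod.map stdInvolution stdInvolution (e.prodCongr e' x) :=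
    Prod.ext (he x.1) (he' x.2)
  rw [AddEquiv.trans_apply, hx]
  ext (_ | _) <;> rfl

theorem HasStdDecomposition.piMap {ι : Type} [Finite ι] {M : ι → Type*}
    [∀ i, AddCommGroup (M i)] {σ : ∀ i, M i → M i} (hσ : ∀ i, HasStdDecomposition (σ i)) :
    HasStdDecomposition (Pi.map σ) := by
  choose ι0 ιp ιm _ _ _ e he using hσ
  let regroup : (∀ i, (ι0 i → ℤ × ℤ) × (ιp i → ℤ) × (ιm i → ℤ)) ≃+
      ((Σ i, ι0 i) → ℤ × ℤ) × ((Σ i, ιp i) → ℤ) × ((Σ i, ιm i) → ℤ) :=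
    { toFun := fun v =>
        (fun j => (v j.1).1 j.2, fun j => (v j.1).2.1 j.2, fun j => (v j.1).2.2 j.2)
      invFun := fun w i =>
        (fun k => w.1 ⟨i, k⟩, fun k => w.2.1 ⟨i, k⟩, fun k => w.2.2 ⟨i, k⟩)
      left_inv := fun _ => rfl
      right_inv := fun _ => rfl
      map_add' := fun _ _ => rfl }
  refine ⟨Σ i, ι0 i, Σ i, ιp i, Σ i, ιm i, inferInstance, inferInstance, inferInstance,
    (AddEquiv.piCongrRight e).trans regroup, fun x => ?_⟩
  have hx : AddEquiv.piCongrRight e (Pi.map σ x) = fun i => stdInvolution (e i (x i)) :=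
    funext fun i => he i (x i)
  rw [AddEquiv.trans_apply, hx]
  rfl

theorem HasStdDecomposition.exists_fin {σ : M → M} (hσ : HasStdDecomposition σ) :
    ∃ (r0 rp rm : ℕ) (e : M ≃+ (Fin r0 → ℤ × ℤ) × (Fin rp → ℤ) × (Fin rm → ℤ)),
      ∀ x, e (σ x) = stdInvolution (e x) := by
  obtain ⟨ι0, ιp, ιm, _, _, _, e, he⟩ := hσ
  let e0 := Finite.equivFin ι0
  let ep := Finite.equivFin ιp
  let em := Finite.equivFin ιm
  let reindex : ((ι0 → ℤ × ℤ) × (ιp → ℤ) × (ιm → ℤ)) ≃+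
      (Fin (Nat.card ι0) → ℤ × ℤ) × (Fin (Nat.card ιp) → ℤ) × (Fin (Nat.card ιm) → ℤ) :=
    { toFun := fun v => (v.1 ∘ e0.symm, v.2.1 ∘ ep.symm, v.2.2 ∘ em.symm)
      invFun := fun w => (w.1 ∘ e0, w.2.1 ∘ ep, w.2.2 ∘ em)
      left_inv := fun _ => by ext <;> simp
      right_inv := fun _ => by ext <;> simp
      map_add' := fun _ _ => rfl }
  exact ⟨_, _, _, e.trans reindex, fun x => by rw [AddEquiv.trans_apply, he]; rfl⟩

end StdDecomposition

section Twist

variable {N Q N' Q' : Type*} [AddCommGroup N] [AddCommGroup N']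

def twist (F : Q → N) (x : N × Q) : N × Q := (-x.1 + F x.2, x.2)

theorem twist_prodCongr [AddCommGroup Q] [AddCommGroup Q'] (eN : N ≃+ N') (eQ : Q ≃+ Q')
    {F : Q → N} {F' : Q' → N'} (hF : ∀ q, eN (F q) = F' (eQ q)) (x : N × Q) :
    eN.prodCongr eQ (twist F x) = twist F' (eN.prodCongr eQ x) :=
  Prod.ext (show eN (-x.1 + F x.2) = -eN x.1 + F' (eQ x.2) by rw [map_add, map_neg, hF]) rfl

theorem hasStdDecomposition_twist_mul (a : ℤ) :
    HasStdDecomposition (twist (a * ·) : ℤ × ℤ → ℤ × ℤ) := by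
  obtain ⟨c, rfl | rfl⟩ := Int.even_or_odd' a
  · refine (hasStdDecomposition_neg.prodMap hasStdDecomposition_id).of_addEquiv
      { toFun := fun x => (x.1 - c * x.2, x.2)
        invFun := fun x => (x.1 + c * x.2, x.2)
        left_inv := fun x => Prod.ext (sub_add_cancel _ _) rfl
        right_inv := fun x => Prod.ext (add_sub_cancel_right _ _) rfl
        map_add' := fun x y => Prod.ext (by simp only [Prod.fst_add, Prod.snd_add]; ring) rfl }
      fun x => ?_
    exact Prod.ext (show -x.1 + 2 * c * x.2 - c * x.2 = -(x.1 - c * x.2) by ring) rfl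
  · -- the shear to `a = 1`, followed by `(u, v) ↦ (v - u, u)`
    refine hasStdDecomposition_swap.of_addEquiv
      { toFun := fun x => ((c + 1) * x.2 - x.1, x.1 - c * x.2)
        invFun := fun x => (x.2 + c * (x.1 + x.2), x.1 + x.2)
        left_inv := fun x => Prod.ext (by dsimp only; ring) (by dsimp only; ring)
        right_inv := fun x => Prod.ext (by dsimp only; ring) (by dsimp only; ring)
        map_add' := fun x y => Prod.ext (by simp only [Prod.fst_add, Prod.snd_add]; ring)
          (by simp only [Prod.fst_add, Prod.snd_add]; ring) }
      fun x => ?_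
    exact Prod.ext (show (c + 1) * x.2 - (-x.1 + (2 * c + 1) * x.2) = x.1 - c * x.2 by ring)
      (show -x.1 + (2 * c + 1) * x.2 - c * x.2 = (c + 1) * x.2 - x.1 by ring)

theorem hasStdDecomposition_twist_diagonal {κ C K : Type} [Finite κ] [Finite C] [Finite K]
    (a : κ → ℤ) :
    HasStdDecomposition
      (twist fun y : (K → ℤ) × (κ → ℤ) => ((a * y.2, 0) : (κ → ℤ) × (C → ℤ))) := by
  refine HasStdDecomposition.of_addEquiv (M' := (C → ℤ) × (K → ℤ) × (κ → ℤ × ℤ))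
    { toFun := fun x => (x.1.2, x.2.1, fun i => (x.1.1 i, x.2.2 i))
      invFun := fun y => ((fun i => (y.2.2 i).1, y.1), (y.2.1, fun i => (y.2.2 i).2))
      left_inv := fun _ => rfl
      right_inv := fun _ => rfl
      map_add' := fun _ _ => rfl }
    (τ := Prod.map (Pi.map fun _ => Neg.neg) (Prod.map (Pi.map fun _ => id)
      (Pi.map fun i => twist (a i * ·)))) (fun x => ?_) ?_
  · ext <;> simp [twist]
  · exact (HasStdDecomposition.piMap fun _ => hasStdDecomposition_neg).prodMap
      ((HasStdDecomposition.piMap fun _ => hasStdDecomposition_id).prodMap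
        (HasStdDecomposition.piMap fun i => hasStdDecomposition_twist_mul (a i)))

end Twist

section Splitting

variable {R M P : Type*} [Ring R] [AddCommGroup M] [Module R M] [AddCommGroup P]
  [Module R P]

theorem LinearMap.exists_linearEquiv_ker_prod_range (f : M →ₗ[R] P)
    [Module.Projective R (range f)] :
    ∃ e : M ≃ₗ[R] ker f × range f, (∀ n : ker f, e n = (n, 0)) ∧ ∀ x, ((e x).2 : P) = f x := by
  have hexact : Exact (ker f).subtype f.rangeRestrict := by
    rw [LinearMap.exact_iff, ker_rangeRestrict, Submodule.range_subtype]
  obtain ⟨l, hl⟩ := Module.projective_lifting_property f.rangeRestrict LinearMap.id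
    f.surjective_rangeRestrict
  obtain ⟨e, he_ker, he_range⟩ :=
    hexact.splitSurjectiveEquiv (ker f).injective_subtype ⟨l, hl⟩
  refine ⟨e, fun n => ?_, fun x => congr_arg Subtype.val (LinearMap.congr_fun he_range x).symm⟩
  exact e.eq_symm_apply.mp (LinearMap.congr_fun he_ker n)

theorem Module.End.exists_linearEquiv_prod_twist (σ : Module.End R M) (hσ : σ * σ = 1)
    [Module.Projective R (range (σ + 1))] :
    ∃ (F : range (σ + 1) →ₗ[R] ker (σ + 1)) (e : M ≃ₗ[R] ker (σ + 1) × range (σ + 1)),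
      ∀ x, e (σ x) = twist F (e x) := by
  obtain ⟨e, he_ker, he_range⟩ := (σ + 1).exists_linearEquiv_ker_prod_range
  refine ⟨fst _ _ _ ∘ₗ e.toLinearMap ∘ₗ σ ∘ₗ e.symm.toLinearMap ∘ₗ inr _ _ _, e, fun x => ?_⟩
  have hker : ∀ n : ker (σ + 1), σ n = ↑(-n) := fun n => eq_neg_of_add_eq_zero_left n.2
  have hrange : ∀ y, (e (σ y)).2 = (e y).2 := fun y => by
    ext
    simp [he_range, ← Module.End.mul_apply, hσ, add_comm]
  obtain ⟨⟨n, q⟩, rfl⟩ := e.symm.surjective x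
  have hdecomp : e.symm (n, q) = n + e.symm (0, q) := by
    rw [← e.symm_apply_eq.mpr (he_ker n).symm, ← map_add, Prod.mk_add_mk, add_zero, zero_add]
  rw [e.apply_symm_apply, hdecomp, map_add, map_add, hker, he_ker]
  refine Prod.ext rfl ?_
  rw [Prod.snd_add, hrange, e.apply_symm_apply, zero_add]
  rfl

end Splitting

theorem LinearMap.exists_linearEquiv_prod_diagonal {R N Q : Type*} [CommRing R] [IsDomain R]
    [IsPrincipalIdealRing R] [AddCommGroup N] [Module R N] [Module.Free R N] [Module.Finite R N]
    [AddCommGroup Q] [Module R Q] [Module.Free R Q] [Module.Finite R Q] (F : Q →ₗ[R] N) :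
    ∃ (κ C K : Type) (_ : Finite κ) (_ : Finite C) (_ : Finite K) (a : κ → R)
      (eN : N ≃ₗ[R] (κ → R) × (C → R)) (eQ : Q ≃ₗ[R] (K → R) × (κ → R)),
      ∀ q, eN (F q) = (a * (eQ q).2, 0) := by
  classical
  obtain ⟨n, snf⟩ := (range F).smithNormalForm (Module.finBasis R N)
  obtain ⟨eQ, -, heQ⟩ := F.exists_linearEquiv_ker_prod_range
  let C := {j // j ∉ Set.range snf.f}
  let g : Fin n ⊕ C ≃ Fin (Module.finrank R N) :=
    (Equiv.sumCongr (Equiv.ofInjective snf.f snf.f.injective) (Equiv.refl C)).trans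
      (Equiv.sumCompl (· ∈ Set.range snf.f))
  refine ⟨Fin n, C, Fin (Module.finrank R (ker F)), inferInstance, inferInstance, inferInstance,
    snf.a, (snf.bM.equivFun.trans (LinearEquiv.funCongrLeft R R g)).trans
      (LinearEquiv.sumPiEquivProdPi R _ _ _),
    eQ.trans ((Module.finBasis R (ker F)).equivFun.prodCongr snf.bN.equivFun), fun q => ?_⟩
  rw [← heQ q]
  ext i
  · exact congr_fun (snf.repr_comp_embedding_eq_smul (eQ q).2) i
  · exact snf.repr_eq_zero_of_notMem_range (eQ q).2 i.2

theorem hasStdDecomposition_of_involution {Λ : Type*} [AddCommGroup Λ] [Module.Free ℤ Λ]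
    [Module.Finite ℤ Λ] (σ : AddMonoid.End Λ) (hσ : σ * σ = 1) : HasStdDecomposition σ := by
  let S : Module.End ℤ Λ := (σ : Λ →+ Λ).toIntLinearMap
  obtain ⟨F, e, he⟩ := S.exists_linearEquiv_prod_twist (LinearMap.ext fun x => congr($hσ x))
  obtain ⟨κ, C, K, _, _, _, a, eN, eQ, hF⟩ := F.exists_linearEquiv_prod_diagonal
  refine (hasStdDecomposition_twist_diagonal a).of_addEquiv
    (e.toAddEquiv.trans (eN.toAddEquiv.prodCongr eQ.toAddEquiv)) fun x => ?_
  change eN.toAddEquiv.prodCongr eQ.toAddEquiv (e (S x)) = _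
  rw [he]
  exact twist_prodCongr eN.toAddEquiv eQ.toAddEquiv hF (e x)

/-- Let `G = {1, σ}` be the cyclic group of order 2 acting on a finitely
generated free abelian group `Λ`. Then there are nonnegative integers `r0, r+, r−` and an
isomorphism of `G`-modules `Λ ≅ ℤ[G]^{r0} ⊕ ℤ₊^{r+} ⊕ ℤ₋^{r−}`, where `ℤ[G]` is modelled
by `ℤ × ℤ` with `σ` swapping the coordinates, `ℤ₊` is `ℤ` with the trivial action and
`ℤ₋` is `ℤ` with `σ` acting by `-1`. In particular `rk Λ = 2·r0 + r+ + r−`. -/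
theorem exists_decomposition_of_involution_on_free_abelian
    {Λ : Type*} [AddCommGroup Λ] [Module.Free ℤ Λ] [Module.Finite ℤ Λ]
    (σ : AddMonoid.End Λ) (hσ : σ * σ = 1) :
    ∃ (r0 rp rm : ℕ)
      (e : Λ ≃+ (Fin r0 → ℤ × ℤ) × (Fin rp → ℤ) × (Fin rm → ℤ)),
      (∀ x : Λ, e (σ x) = ((fun i => ((e x).1 i).swap), (e x).2.1, -(e x).2.2)) ∧
      Module.finrank ℤ Λ = 2 * r0 + rp + rm := by
  obtain ⟨r0, rp, rm, e, he⟩ := (hasStdDecomposition_of_involution σ hσ).exists_fin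
  refine ⟨r0, rp, rm, e, he, ?_⟩
  rw [e.toIntLinearEquiv.finrank_eq]
  simp [Module.finrank_pi_fintype, mul_comm, add_assoc]
end

section
/- Let Λ be a finitely generated free abelian group with an additive involution σ, and let Λ* = Hom_ℤ(Λ, ℤ) carry the induced involution (σ·f)(x) = f(σx). Then Λ* is isomorphic to Λ as a G-module, i.e. there is a group isomorphism Λ → Λ* commuting with the involutions. -/
/-!
A lattice with involution is a direct sum of copies of the trivial lattice `ℤ`, the sign
lattice `ℤ₋` and the regular lattice `ℤ[G]`. Each of these is self-dual, since in the bases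
`(1)`, `(1)` and `(1, σ)` the involution has a symmetric matrix, and self-duality passes to
invariant direct sums.

If `Λ` is the sum of the eigenspaces `Λ⁺` and `Λ⁻` of `σ`, we are done. Otherwise pick
`x ∉ Λ⁺ + Λ⁻`. Then `x + σx` and `x - σx` are odd multiples of primitive vectors `g ∈ Λ⁺` and
`h ∈ Λ⁻`, and correcting `x` by multiples of `g` and `h` gives `y` with `y + σy = g` and
`y - σy = h`. Functionals taking the value `1` at `g` and at `h` combine into `φ` with `φ y = 1`
and `φ (σ y) = 0`, so `z ↦ φ z • y + φ (σ z) • σ y` is an equivariant projection onto a regular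
summand `ℤ y ⊕ ℤ σy`. Its kernel is an invariant complement of smaller rank, and we induct.
-/

open Module Module.End

theorem Module.End.eigenspace_neg {R M : Type*} [CommRing R] [AddCommGroup M] [Module R M]
    (f : End R M) (μ : R) : eigenspace (-f) μ = eigenspace f (-μ) := by
  ext z
  simp [neg_eq_iff_eq_neg]

theorem exists_eq_smul_and_dual_apply_eq_one {R M : Type*} [CommRing R] [IsDomain R]
    [IsPrincipalIdealRing R] [AddCommGroup M] [Module R M] [Module.Free R M] [Module.Finite R M]
    {g : M} (hg : g ≠ 0) : ∃ (c : R) (g₀ : M) (ψ : Dual R M), g = c • g₀ ∧ ψ g₀ = 1 := by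
  let b := Free.chooseBasis R M
  let I := LinearMap.range (Dual.eval R M g)
  set c := Submodule.IsPrincipal.generator I
  obtain ⟨ψ, hψ⟩ : c ∈ I := Submodule.IsPrincipal.generator_mem I
  have hdvd : ∀ i, c ∣ b.repr g i := fun i =>
    (Submodule.IsPrincipal.mem_iff_generator_dvd I).mp ⟨b.coord i, rfl⟩
  choose d hd using hdvd
  have hcg : g = c • ∑ i, d i • b i := by
    conv_lhs => rw [← b.sum_repr g]
    simp [hd, Finset.smul_sum, mul_smul]
  have hc : c ≠ 0 := by
    rintro hc
    exact hg (by rw [hcg, hc, zero_smul])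
  refine ⟨c, _, ψ, hcg, mul_left_cancel₀ hc ?_⟩
  rw [mul_one, ← smul_eq_mul, ← map_smul, ← hcg]
  exact hψ

section

variable {L : Type*} [AddCommGroup L]

/-- `e` is an isomorphism of `G`-modules `L ≃ L*`, with `σ` acting on `L*` by precomposition. -/
def IsSelfDual (σ : L →ₗ[ℤ] L) : Prop :=
  ∃ e : L ≃ₗ[ℤ] Dual ℤ L, ∀ x y, e (σ x) y = e x (σ y)

variable {σ : L →ₗ[ℤ] L}

theorem isSelfDual_of_forall_eq_smul [Module.Free ℤ L] [Module.Finite ℤ L] (c : ℤ)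
    (h : ∀ x, σ x = c • x) : IsSelfDual σ :=
  ⟨(Free.chooseBasis ℤ L).toDualEquiv, fun x y => by simp [h]⟩

theorem Module.Basis.isSelfDual {ι : Type*} [Finite ι] [DecidableEq ι] (b : Basis ι ℤ L)
    (h : ∀ i j, b.repr (σ (b i)) j = b.repr (σ (b j)) i) : IsSelfDual σ := by
  refine ⟨b.toDualEquiv, fun x y => ?_⟩
  have : b.toDual ∘ₗ σ = σ.dualMap ∘ₗ b.toDual :=
    b.ext fun i => b.ext fun j => by simp [Basis.toDual_apply_left, Basis.toDual_apply_right, h]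
  exact LinearMap.congr_fun₂ this x y

theorem IsSelfDual.of_isCompl {S T : Submodule ℤ L} (hST : IsCompl S T)
    (hS : ∀ x ∈ S, σ x ∈ S) (hT : ∀ x ∈ T, σ x ∈ T)
    (hσS : IsSelfDual (σ.restrict hS)) (hσT : IsSelfDual (σ.restrict hT)) : IsSelfDual σ := by
  obtain ⟨eS, heS⟩ := hσS
  obtain ⟨eT, heT⟩ := hσT
  let Φ : L ≃ₗ[ℤ] S × T := (Submodule.prodEquivOfIsCompl S T hST).symm
  have hΦσ : ∀ p : S × T, Φ (σ (Φ.symm p)) = (σ.restrict hS p.1, σ.restrict hT p.2) := by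
    intro p
    simp [Φ, Submodule.projectionOnto_apply_of_mem_left,
      Submodule.projectionOnto_apply_of_mem_right, hS _ p.1.2, hT _ p.2.2,
      LinearMap.restrict_apply]
  refine ⟨Φ ≪≫ₗ eS.prodCongr eT ≪≫ₗ dualProdDualEquivDual ℤ S T ≪≫ₗ Φ.dualMap, fun x y => ?_⟩
  obtain ⟨p, rfl⟩ := Φ.symm.surjective x
  obtain ⟨q, rfl⟩ := Φ.symm.surjective y
  simp [dualProdDualEquivDual_apply, hΦσ, heS, heT]

theorem isSelfDual_of_sup_eigenspace_eq_top [Module.Free ℤ L] [Module.Finite ℤ L]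
    (h : eigenspace σ 1 ⊔ eigenspace σ (-1) = ⊤) : IsSelfDual σ := by
  have hdisj : Disjoint (eigenspace σ 1) (eigenspace σ (-1)) :=
    (eigenspaces_iSupIndep σ).pairwiseDisjoint (by decide : (1 : ℤ) ≠ -1)
  have hmaps : ∀ μ : ℤ, ∀ z ∈ eigenspace σ μ, σ z ∈ eigenspace σ μ := fun μ z hz => by
    rw [mem_eigenspace_iff.mp hz]
    exact Submodule.smul_mem _ _ hz
  have hrestrict : ∀ μ : ℤ, IsSelfDual (σ.restrict (hmaps μ)) := fun μ =>
    isSelfDual_of_forall_eq_smul μ fun z => Subtype.ext (mem_eigenspace_iff.mp z.2)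
  exact IsSelfDual.of_isCompl ⟨hdisj, codisjoint_iff.mpr h⟩ (hmaps 1) (hmaps (-1))
    (hrestrict 1) (hrestrict (-1))

theorem mem_sup_eigenspace_of_two_smul_eq [IsTorsionFree ℤ L] (hσ : Function.Involutive σ)
    {x u : L} (h : (2 : ℤ) • u = x + σ x) : x ∈ eigenspace σ 1 ⊔ eigenspace σ (-1) := by
  have hu : σ u = u := by
    rw [← smul_right_inj (two_ne_zero' ℤ), ← map_smul, h, map_add, hσ x, add_comm]
  refine Submodule.mem_sup.mpr ⟨u, by simpa [mem_eigenspace_iff] using hu, x - u, ?_, by abel⟩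
  rw [mem_eigenspace_iff, map_sub, hu]
  linear_combination (norm := module) -h

theorem exists_odd_smul_eq_add_apply [Module.Free ℤ L] [Module.Finite ℤ L]
    (hσ : Function.Involutive σ) {x : L} (hx : x ∉ eigenspace σ 1 ⊔ eigenspace σ (-1)) :
    ∃ (a : ℤ) (g : L) (ψ : Dual ℤ L), x + σ x = (2 * a + 1) • g ∧ σ g = g ∧ ψ g = 1 := by
  have hne : x + σ x ≠ 0 := fun h =>
    hx (mem_sup_eigenspace_of_two_smul_eq hσ (u := 0) (by rw [h, smul_zero]))
  obtain ⟨c, g, ψ, hcg, hψ⟩ := exists_eq_smul_and_dual_apply_eq_one (R := ℤ) hne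
  obtain ⟨a, rfl | rfl⟩ := Int.even_or_odd' c
  · exact absurd (mem_sup_eigenspace_of_two_smul_eq hσ (u := a • g) (by rw [hcg, smul_smul])) hx
  · refine ⟨a, g, ψ, hcg, ?_, hψ⟩
    rw [← smul_right_inj (show 2 * a + 1 ≠ 0 by omega), ← map_smul, ← hcg, map_add, hσ x,
      add_comm]

theorem exists_dual_apply_eq_one_apply_eq_zero (hσ : Function.Involutive σ) {x : L}
    {ψ χ : Dual ℤ L} (hψ : ψ (x + σ x) = 1) (hχ : χ (x - σ x) = 1) :
    ∃ φ : Dual ℤ L, φ x = 1 ∧ φ (σ x) = 0 := by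
  -- `ψ x + ψ (σ x) = 1` already; the correction term keeps that sum and makes `φ x = 1`.
  simp only [map_add, map_sub] at hψ hχ
  refine ⟨ψ + (1 - ψ x) • (χ - χ ∘ₗ σ), ?_, ?_⟩ <;>
    simp only [LinearMap.add_apply, LinearMap.smul_apply, LinearMap.sub_apply,
      LinearMap.comp_apply, smul_eq_mul, hσ x]
  · linear_combination (1 - ψ x) * hχ
  · linear_combination hψ - (1 - ψ x) * hχ

theorem exists_dual_apply_eq_one_apply_eq_zero_of_notMem_sup [Module.Free ℤ L]
    [Module.Finite ℤ L] (hσ : Function.Involutive σ) {x : L}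
    (hx : x ∉ eigenspace σ 1 ⊔ eigenspace σ (-1)) :
    ∃ (y : L) (φ : Dual ℤ L), φ y = 1 ∧ φ (σ y) = 0 := by
  -- `-σ` swaps the two eigenspaces and turns `x + σ x` into `x - σ x`.
  have hσ' : Function.Involutive (-σ) := fun z => by simp [hσ z]
  obtain ⟨a, g, ψ, hg, hσg, hψ⟩ := exists_odd_smul_eq_add_apply hσ hx
  obtain ⟨b, h, χ, hh, hσh, hχ⟩ := exists_odd_smul_eq_add_apply hσ'
    (by rwa [eigenspace_neg, eigenspace_neg, neg_neg, sup_comm])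
  simp only [LinearMap.neg_apply, neg_eq_iff_eq_neg] at hh hσh
  refine ⟨x - a • g - b • h, exists_dual_apply_eq_one_apply_eq_zero hσ (ψ := ψ) (χ := χ) ?_ ?_⟩
  · convert hψ using 2
    simp only [map_sub, map_smul, hσg, hσh]
    linear_combination (norm := module) hg
  · convert hχ using 2
    simp only [map_sub, map_smul, hσg, hσh]
    linear_combination (norm := module) hh

section RegularSummand

/-- The composite of the `G`-maps `L → ℤ[G]`, `z ↦ φ z + φ (σ z) σ`, and `ℤ[G] → L`, `1 ↦ x`. -/
def regularProjection (σ : L →ₗ[ℤ] L) (φ : Dual ℤ L) (x : L) : L →ₗ[ℤ] L :=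
  φ.smulRight x + (φ ∘ₗ σ).smulRight (σ x)

variable {φ : Dual ℤ L} {x : L}

@[simp]
theorem regularProjection_apply (z : L) :
    regularProjection σ φ x z = φ z • x + φ (σ z) • σ x := rfl

theorem regularProjection_apply_comm (hσ : Function.Involutive σ) (z : L) :
    regularProjection σ φ x (σ z) = σ (regularProjection σ φ x z) := by
  simp [hσ z, hσ x, add_comm]

theorem regularProjection_apply_self (hσ : Function.Involutive σ) (h1 : φ x = 1)
    (h0 : φ (σ x) = 0) :
    regularProjection σ φ x x = x ∧ regularProjection σ φ x (σ x) = σ x := by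
  simp [hσ x, h1, h0]

theorem isIdempotentElem_regularProjection (hσ : Function.Involutive σ) (h1 : φ x = 1)
    (h0 : φ (σ x) = 0) : IsIdempotentElem (regularProjection σ φ x) := by
  obtain ⟨hx, hσx⟩ := regularProjection_apply_self hσ h1 h0
  refine LinearMap.ext fun z => ?_
  simp only [Module.End.mul_apply, regularProjection_apply z, map_add, map_smul, hx, hσx]

theorem linearIndependent_pair_of_dual_apply (hσ : Function.Involutive σ) (h1 : φ x = 1)
    (h0 : φ (σ x) = 0) : LinearIndependent ℤ ![x, σ x] := by
  refine LinearIndependent.pair_iff.mpr fun s t hst => ⟨?_, ?_⟩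
  · simpa [h1, h0] using congr_arg φ hst
  · simpa [hσ x, h1, h0] using congr_arg (φ ∘ₗ σ) hst

theorem range_regularProjection (hσ : Function.Involutive σ) (h1 : φ x = 1)
    (h0 : φ (σ x) = 0) :
    LinearMap.range (regularProjection σ φ x) = Submodule.span ℤ (Set.range ![x, σ x]) := by
  obtain ⟨hx, hσx⟩ := regularProjection_apply_self hσ h1 h0
  apply le_antisymm
  · rintro _ ⟨z, rfl⟩
    exact (Submodule.mem_span_range_iff_exists_fun ℤ).mpr ⟨![φ z, φ (σ z)], by simp⟩
  · rw [Submodule.span_le, Set.range_subset_iff]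
    intro i
    fin_cases i
    exacts [⟨x, hx⟩, ⟨σ x, hσx⟩]

theorem exists_invariant_complement_of_dual_apply [Module.Free ℤ L] [Module.Finite ℤ L]
    (hσ : Function.Involutive σ) (h1 : φ x = 1) (h0 : φ (σ x) = 0) :
    ∃ (T : Submodule ℤ L) (hT : ∀ z ∈ T, σ z ∈ T),
      finrank ℤ T + 2 = finrank ℤ L ∧ (IsSelfDual (σ.restrict hT) → IsSelfDual σ) := by
  set π := regularProjection σ φ x
  have hli := linearIndependent_pair_of_dual_apply hσ h1 h0
  set S := Submodule.span ℤ (Set.range ![x, σ x])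
  have hπS : LinearMap.range π = S := range_regularProjection hσ h1 h0
  have hST : IsCompl S (LinearMap.ker π) :=
    hπS ▸ LinearMap.IsIdempotentElem.isCompl (isIdempotentElem_regularProjection hσ h1 h0)
  have hSσ : ∀ z ∈ S, σ z ∈ S := by
    rw [← hπS]
    rintro _ ⟨z, rfl⟩
    exact ⟨σ z, regularProjection_apply_comm hσ z⟩
  have hTσ : ∀ z ∈ LinearMap.ker π, σ z ∈ LinearMap.ker π := fun z hz => by
    rw [LinearMap.mem_ker] at hz ⊢
    rw [regularProjection_apply_comm hσ, hz, map_zero]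
  let b : Basis (Fin 2) ℤ S := Basis.span hli
  refine ⟨LinearMap.ker π, hTσ, ?_, IsSelfDual.of_isCompl hST hSσ hTσ (b.isSelfDual ?_)⟩
  · rw [← (Submodule.prodEquivOfIsCompl _ _ hST).finrank_eq, finrank_prod,
      finrank_eq_card_basis b, Fintype.card_fin, add_comm]
  · have hσb : σ.restrict hSσ (b 0) = b 1 ∧ σ.restrict hSσ (b 1) = b 0 := by
      simp [b, Subtype.ext_iff, Basis.coe_span_apply hli, hσ x]
    intro i j
    fin_cases i <;> fin_cases j <;> simp [hσb]

end RegularSummand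

theorem isSelfDual_of_involutive [Module.Free ℤ L] [Module.Finite ℤ L]
    (hσ : Function.Involutive σ) : IsSelfDual σ := by
  induction hn : finrank ℤ L using Nat.strong_induction_on generalizing L with
  | _ n ih =>
  by_cases hsplit : eigenspace σ 1 ⊔ eigenspace σ (-1) = ⊤
  · exact isSelfDual_of_sup_eigenspace_eq_top hsplit
  obtain ⟨x, -, hx⟩ := SetLike.exists_of_lt (lt_top_iff_ne_top.mpr hsplit)
  obtain ⟨y, φ, h1, h0⟩ := exists_dual_apply_eq_one_apply_eq_zero_of_notMem_sup hσ hx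
  obtain ⟨T, hT, hrank, hlift⟩ := exists_invariant_complement_of_dual_apply hσ h1 h0
  exact hlift (ih _ (by omega) (fun z => Subtype.ext (hσ z)) rfl)

end

/-- Let `Λ` be a finitely generated free abelian group with an additive
involution `σ`, and let `Λ* = Hom_ℤ(Λ, ℤ)` carry the induced involution
`(σ·f)(x) = f(σx)`. Then `Λ*` is isomorphic to `Λ` as a `G`-module: there is a group
isomorphism `e : Λ ≃ Λ*` commuting with the involutions, i.e.
`e(σ x) = (e x) ∘ σ` for all `x`. -/
theorem dual_isomorphic_as_G_module
    {Λ : Type*} [AddCommGroup Λ] [Module.Free ℤ Λ] [Module.Finite ℤ Λ]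
    (σ : AddMonoid.End Λ) (hσ : σ * σ = 1) :
    ∃ e : Λ ≃+ (Λ →+ ℤ), ∀ x y : Λ, e (σ x) y = e x (σ y) := by
  obtain ⟨e, he⟩ := isSelfDual_of_involutive (σ := σ.toIntLinearMap) (DFunLike.congr_fun hσ)
  exact ⟨e.toAddEquiv.trans (addMonoidHomLequivInt ℤ).symm.toAddEquiv, he⟩
end

section
/- Let N be a finitely generated free abelian group with an additive involution σ, and let N^{σ=−1} = {x ∈ N : σx = −x}. Then the natural map N^{σ=−1} ⊗ ℚ/ℤ → N ⊗ ℚ/ℤ is injective and its image equals (σ ⊗ id − id)(N ⊗ ℚ/ℤ) = Pr(N ⊗ ℚ/ℤ, σ). -/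
open TensorProduct

/-- `ℚ/ℤ`, the quotient of `ℚ` by the image of `ℤ`. -/
abbrev QmodZ : Type := ℚ ⧸ (Int.castAddHom ℚ).range

/-- Let `N` be a finitely generated free abelian group with an additive
involution `σ`, and `N^{σ=−1} = {x ∈ N : σx = −x}`.  Then the natural map
`N^{σ=−1} ⊗ ℚ/ℤ → N ⊗ ℚ/ℤ` is injective, and its image equals
`(σ ⊗ id − id)(N ⊗ ℚ/ℤ) = Pr(N ⊗ ℚ/ℤ, σ)`. -/
theorem antiInvariant_tensor_QmodZ_eq_prym
    {N : Type*} [AddCommGroup N] [Module.Free ℤ N] [Module.Finite ℤ N]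
    (σ : N →ₗ[ℤ] N) (hσ : ∀ x, σ (σ x) = x) :
    Function.Injective
      (LinearMap.rTensor QmodZ (LinearMap.ker (σ + LinearMap.id)).subtype) ∧
    LinearMap.range
        (LinearMap.rTensor QmodZ (LinearMap.ker (σ + LinearMap.id)).subtype) =
      LinearMap.range (LinearMap.rTensor QmodZ (σ - LinearMap.id)) := by
  set K := LinearMap.ker (σ + LinearMap.id) with hK
  -- the quotient N ⧸ K is torsion-free
  haveI hNZ : NoZeroSMulDivisors ℤ (N ⧸ K) := by
    refine ⟨fun {c x} h => ?_⟩
    obtain ⟨n, rfl⟩ := Submodule.Quotient.mk_surjective K x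
    rcases eq_or_ne c 0 with hc | hc
    · exact Or.inl hc
    · refine Or.inr ?_
      rw [← Submodule.Quotient.mk_smul, Submodule.Quotient.mk_eq_zero] at h
      rw [Submodule.Quotient.mk_eq_zero]
      have h' : c • (((σ + LinearMap.id : N →ₗ[ℤ] N)) n) = 0 := by
        have h2 := h
        rw [hK, LinearMap.mem_ker, map_smul] at h2
        exact h2
      have h3 : ((σ + LinearMap.id : N →ₗ[ℤ] N)) n = 0 := by
        rcases smul_eq_zero.mp h' with h1 | h1
        · exact absurd h1 hc
        · exact h1
      rw [hK, LinearMap.mem_ker]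
      exact h3
  haveI : Module.Free ℤ (N ⧸ K) := Module.free_of_finite_type_torsion_free'
  -- split the quotient map, get a retraction of the inclusion
  obtain ⟨s, hs⟩ := Module.projective_lifting_property K.mkQ
    (LinearMap.id : (N ⧸ K) →ₗ[ℤ] (N ⧸ K)) (Submodule.mkQ_surjective K)
  set r : N →ₗ[ℤ] K := LinearMap.codRestrict K (LinearMap.id - s ∘ₗ K.mkQ) (by
    intro x
    have h1 : K.mkQ (s (K.mkQ x)) = K.mkQ x := by
      have := LinearMap.congr_fun hs (K.mkQ x)
      simpa using this
    show ((LinearMap.id - s ∘ₗ K.mkQ : N →ₗ[ℤ] N)) x ∈ K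
    have h0 : K.mkQ (((LinearMap.id - s ∘ₗ K.mkQ : N →ₗ[ℤ] N)) x) = 0 := by
      simp only [LinearMap.sub_apply, LinearMap.id_apply, LinearMap.comp_apply,
        map_sub, h1, sub_self]
    rw [Submodule.mkQ_apply, Submodule.Quotient.mk_eq_zero] at h0
    exact h0) with hr
  have hretr : r ∘ₗ K.subtype = LinearMap.id := by
    ext m
    have hm : K.mkQ (m : N) = 0 := (Submodule.Quotient.mk_eq_zero K).mpr m.2
    rw [Submodule.mkQ_apply] at hm
    simp [hr, LinearMap.codRestrict, hm]
  constructor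
  · -- injectivity from the retraction
    have hcomp : (LinearMap.rTensor QmodZ r) ∘ₗ (LinearMap.rTensor QmodZ K.subtype)
        = LinearMap.id := by
      rw [← LinearMap.rTensor_comp, hretr, LinearMap.rTensor_id]
    intro x y hxy
    have hx := LinearMap.congr_fun hcomp x
    have hy := LinearMap.congr_fun hcomp y
    simp only [LinearMap.coe_comp, Function.comp_apply, LinearMap.id_coe, id_eq] at hx hy
    rw [← hx, ← hy, hxy]
  · apply le_antisymm
    · -- image of K ⊗ Q/Z lands in the Prym part, using divisibility by 2
      rintro _ ⟨t, rfl⟩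
      induction t using TensorProduct.induction_on with
      | zero => simp
      | tmul m q =>
        obtain ⟨a, rfl⟩ := QuotientAddGroup.mk'_surjective (Int.castAddHom ℚ).range q
        have hm : σ (m : N) = -(m : N) := by
          have h3 : σ (m : N) + (m : N) = 0 := by
            have h4 := LinearMap.mem_ker.mp m.2
            simpa only [LinearMap.add_apply, LinearMap.id_apply] using h4
          exact eq_neg_of_add_eq_zero_left h3
        refine ⟨(-(m : N)) ⊗ₜ[ℤ] (QuotientAddGroup.mk' (Int.castAddHom ℚ).range (a / 2)), ?_⟩
        have h2q : (2 : ℤ) • (QuotientAddGroup.mk' (Int.castAddHom ℚ).range (a / 2))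
            = QuotientAddGroup.mk' (Int.castAddHom ℚ).range a := by
          rw [← map_zsmul]
          congr 1
          rw [zsmul_eq_mul]
          push_cast
          ring
        have hσm : ((σ - LinearMap.id : N →ₗ[ℤ] N)) (-(m : N)) = (2 : ℤ) • (m : N) := by
          simp [LinearMap.sub_apply, hm, two_smul]
        calc LinearMap.rTensor QmodZ (σ - LinearMap.id)
              ((-(m : N)) ⊗ₜ[ℤ] (QuotientAddGroup.mk' (Int.castAddHom ℚ).range (a / 2)))
            = (((σ - LinearMap.id : N →ₗ[ℤ] N)) (-(m : N))) ⊗ₜ[ℤ]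
                (QuotientAddGroup.mk' (Int.castAddHom ℚ).range (a / 2)) := by
              rw [LinearMap.rTensor_tmul]
          _ = ((2 : ℤ) • (m : N)) ⊗ₜ[ℤ]
                (QuotientAddGroup.mk' (Int.castAddHom ℚ).range (a / 2)) := by rw [hσm]
          _ = (m : N) ⊗ₜ[ℤ] ((2 : ℤ) • QuotientAddGroup.mk' (Int.castAddHom ℚ).range (a / 2)) := by
              rw [TensorProduct.smul_tmul]
          _ = LinearMap.rTensor QmodZ K.subtype
                (m ⊗ₜ[ℤ] (QuotientAddGroup.mk' (Int.castAddHom ℚ).range a)) := by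
              rw [h2q]; simp [LinearMap.rTensor_tmul]
      | add x y hx hy =>
        rw [map_add]
        exact Submodule.add_mem _ hx hy
    · -- the Prym part is contained in the image of K ⊗ Q/Z
      rintro _ ⟨t, rfl⟩
      induction t using TensorProduct.induction_on with
      | zero => simp
      | tmul n q =>
        have hmem : σ n - n ∈ K := by
          rw [hK, LinearMap.mem_ker]
          simp only [LinearMap.add_apply, LinearMap.id_apply, map_sub, hσ n]
          abel
        refine ⟨(⟨σ n - n, hmem⟩ : K) ⊗ₜ[ℤ] q, ?_⟩
        simp [LinearMap.rTensor_tmul, TensorProduct.sub_tmul]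
      | add x y hx hy =>
        rw [map_add]
        exact Submodule.add_mem _ hx hy
end

section
/- Let (M, b) be a lattice and x ∈ M \ ker(b); let s = s_b(x) be the scale of x and write b(x, x) = s·c0 with c0 ∈ ℤ. Then the scale of x in (M, m^+_x(b)) equals |s + c0| and the scale of x in (M, m^−_x(b)) equals |s − c0| (with the convention that the scale is 0 when x lies in the kernel of the form). -/
/-- `s` is the scale of `x` with respect to the bilinear form `b`: if `x` lies in the
kernel of `b` then `s = 0`; otherwise `s` is the largest positive integer dividing
`b(x, m)` for all `m`. -/
def IsScale {M : Type*} (b : M → M → ℤ) (x : M) (s : ℤ) : Prop :=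
  (s = 0 ∧ ∀ m, b x m = 0) ∨
  (0 < s ∧ (∀ m, s ∣ b x m) ∧ ∀ t : ℤ, 0 < t → (∀ m, t ∣ b x m) → t ≤ s)

/-! The values `b(x, ·)` form a subgroup of `ℤ`, hence a cyclic one `gℤ`; maximality of the
scale `s` forces `|g| = s`, so `s` itself is a value. Dividing by `s`, the linear form
`b(x, ·) / s` takes the value `1`, and `m^±_x(b)(x, ·) = (s ± c0) · (b(x, ·) / s)`, whose
scale is then `|s ± c0|`. -/

theorem IsScale.exists_apply_eq {M : Type*} [AddCommGroup M] {b : M →+ M →+ ℤ} {x : M}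
    {s : ℤ} (hs : IsScale (fun m n => b m n) x s) : ∃ m, b x m = s := by
  rcases hs with ⟨rfl, -⟩ | ⟨hs0, hdvd, hmax⟩
  · exact ⟨0, map_zero _⟩
  obtain ⟨g, hg⟩ := Int.subgroup_cyclic (b x).range
  rw [← AddSubgroup.zmultiples_eq_closure] at hg
  have hg_dvd : ∀ m, g ∣ b x m := fun m => Int.mem_zmultiples_iff.1 (hg ▸ ⟨m, rfl⟩)
  obtain ⟨m, hm⟩ : g ∈ (b x).range := hg ▸ AddSubgroup.mem_zmultiples g
  have hg0 : g ≠ 0 := by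
    rintro rfl
    have := hmax (s + 1) (by omega) fun m => by simp [zero_dvd_iff.1 (hg_dvd m)]
    omega
  have habs : |g| = s := le_antisymm
    (hmax |g| (abs_pos.2 hg0) fun m => (abs_dvd _ _).2 (hg_dvd m))
    (Int.le_of_dvd (abs_pos.2 hg0) ((dvd_abs _ _).2 (hm ▸ hdvd m)))
  rcases abs_choice g with h | h
  · exact ⟨m, by rw [hm, ← h, habs]⟩
  · exact ⟨-m, by rw [map_neg, hm]; linarith⟩

theorem isScale_abs_of_apply_eq_mul {M : Type*} {c : M → M → ℤ} {x : M} {f : M → ℤ}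
    {d : ℤ} {m₁ : M} (hm₁ : f m₁ = 1) (hc : ∀ m, c x m = d * f m) : IsScale c x |d| := by
  rcases eq_or_ne d 0 with rfl | hd
  · exact Or.inl ⟨abs_zero, fun m => by rw [hc, zero_mul]⟩
  refine Or.inr ⟨abs_pos.2 hd, fun m => ?_, fun t _ htdvd => ?_⟩
  · rw [hc, abs_dvd]
    exact dvd_mul_right d (f m)
  · have htd : t ∣ d := by simpa [hc, hm₁] using htdvd m₁
    exact Int.le_of_dvd (abs_pos.2 hd) ((dvd_abs t d).2 htd)

theorem scale_of_modification_general
    {M : Type*} [AddCommGroup M]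
    (b : M →+ M →+ ℤ)
    (x : M) (hx : ¬ ∀ m, b x m = 0)
    (s c0 : ℤ)
    (hs : IsScale (fun m n => b m n) x s)
    (hc0 : b x x = s * c0) :
    IsScale (fun α β => b α β + b x α / s * (b x β / s)) x |s + c0| ∧
    IsScale (fun α β => b α β - b x α / s * (b x β / s)) x |s - c0| := by
  obtain ⟨hs0, hdvd, -⟩ := hs.resolve_left fun h => hx h.2
  obtain ⟨m₁, hm₁⟩ := hs.exists_apply_eq
  have hunit : b x m₁ / s = 1 := by rw [hm₁, Int.ediv_self hs0.ne']
  have hxx : b x x / s = c0 := by rw [hc0, Int.mul_ediv_cancel_left _ hs0.ne']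
  have hquot : ∀ m, s * (b x m / s) = b x m := fun m => Int.mul_ediv_cancel' (hdvd m)
  constructor
  · refine isScale_abs_of_apply_eq_mul (f := fun m => b x m / s) hunit fun m => ?_
    rw [hxx, add_mul, hquot]
  · refine isScale_abs_of_apply_eq_mul (f := fun m => b x m / s) hunit fun m => ?_
    rw [hxx, sub_mul, hquot]

/-- Let `(M, b)` be a lattice and `x ∈ M \ ker(b)`; let `s = s_b(x)` be
the scale of `x` and write `b(x, x) = s·c0`.  Then the scale of `x` in the
(+)-modification `m^+_x(b)(α, β) = b(α, β) + b(x, α)·b(x, β)/s²` equals `|s + c0|`, and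
the scale of `x` in the (−)-modification `m^−_x(b)` equals `|s − c0|` (with the
convention that the scale is `0` when `x` lies in the kernel of the form). -/
theorem scale_of_modification
    {M : Type*} [AddCommGroup M] [Module.Free ℤ M] [Module.Finite ℤ M]
    (b : M →+ M →+ ℤ) (hbsymm : ∀ x y, b x y = b y x)
    (x : M) (hx : ¬ ∀ m, b x m = 0)
    (s c0 : ℤ)
    (hs : IsScale (fun m n => b m n) x s)
    (hc0 : b x x = s * c0) :
    IsScale (fun α β => b α β + b x α / s * (b x β / s)) x |s + c0| ∧
    IsScale (fun α β => b α β - b x α / s * (b x β / s)) x |s - c0| :=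
  scale_of_modification_general b x hx s c0 hs hc0
end

section
/- Let (M, b) be a lattice and x ∈ M \ ker(b); let s = s_b(x) and write b(x, x) = s·c0. If s + c0 ≠ 0 and s − c0 ≠ 0, then the orthogonal complement of x is the same for all three forms: {y ∈ M : b(x, y) = 0} = {y ∈ M : m^+_x(b)(x, y) = 0} = {y ∈ M : m^−_x(b)(x, y) = 0}. -/
/-- Let `(M, b)` be a lattice and `x ∈ M \ ker(b)`; let `s = s_b(x)` and
write `b(x, x) = s·c0`.  If `s + c0 ≠ 0` and `s − c0 ≠ 0`, then the orthogonal
complement of `x` is the same for `b`, for `m^+_x(b)` and for `m^−_x(b)`: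
`{y : b(x, y) = 0} = {y : m^+_x(b)(x, y) = 0} = {y : m^−_x(b)(x, y) = 0}`. -/
theorem orthogonal_complement_of_modification
    {M : Type*} [AddCommGroup M] [Module.Free ℤ M] [Module.Finite ℤ M]
    (b : M →+ M →+ ℤ) (hbsymm : ∀ x y, b x y = b y x)
    (x : M) (hx : ¬ ∀ m, b x m = 0)
    (s c0 : ℤ)
    (hs : IsScale (fun m n => b m n) x s)
    (hc0 : b x x = s * c0)
    (hplus : s + c0 ≠ 0) (hminus : s - c0 ≠ 0) :
    ∀ y : M,
      (b x y = 0 ↔ b x y + b x x / s * (b x y / s) = 0) ∧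
      (b x y = 0 ↔ b x y - b x x / s * (b x y / s) = 0) := by
  rcases hs with ⟨_, h0⟩ | ⟨hspos, hdvd, _⟩
  · exact absurd h0 hx
  intro y
  have hsne : s ≠ 0 := hspos.ne'
  obtain ⟨k, hk'⟩ := hdvd y
  have hk : b x y = s * k := hk'
  have hcc : b x x / s = c0 := by rw [hc0, Int.mul_ediv_cancel_left _ hsne]
  have hkk : b x y / s = k := by rw [hk, Int.mul_ediv_cancel_left _ hsne]
  rw [hcc, hkk, hk]
  constructor <;> constructor <;> intro h
  · simp [mul_eq_zero.mp h |>.resolve_left hsne]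
  · have : (s + c0) * k = 0 := by ring_nf; linarith
    rcases mul_eq_zero.mp this with h' | h'
    · exact absurd h' hplus
    · simp [h']
  · simp [mul_eq_zero.mp h |>.resolve_left hsne]
  · have : (s - c0) * k = 0 := by ring_nf; linarith
    rcases mul_eq_zero.mp this with h' | h'
    · exact absurd (by linarith : s - c0 = 0) hminus
    · simp [h']
end

section
/- Let Λ be a torsion-free abelian group, M an abelian group with an additive involution σ, and Φ : Λ → M, Ψ : M → Λ group homomorphisms satisfying Ψ ∘ Φ = −2·id_Λ and Φ ∘ Ψ = σ − id_M. Assume {m ∈ M : σm = −m} = (σ − 1)M. Then Φ is injective and its image equals Pr(M, σ) = (σ − 1)M. -/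
/-! Since `Ψ ∘ Φ = -2`, `Φ` is injective on a torsion-free group, and every `Φ x` is
anti-invariant: `σ (Φ x) - Φ x = Φ (Ψ (Φ x)) = -2 Φ x`. The vanishing of `H¹` puts the
anti-invariant elements in `(σ - 1) M`, while `(σ - 1) m = Φ (Ψ m)` gives the converse inclusion. -/

theorem AddMonoidHom.injective_of_comp_eq_zsmul {Λ M : Type*} [AddCommGroup Λ]
    [AddCommGroup M] {n : ℤ} (htf : ∀ x : Λ, n • x = 0 → x = 0)
    (Φ : Λ →+ M) (Ψ : M →+ Λ) (h : ∀ x, Ψ (Φ x) = n • x) : Function.Injective Φ := by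
  intro x y hxy
  have hn_smul : n • (x - y) = 0 := by rw [zsmul_sub, ← h, ← h, hxy, sub_self]
  exact sub_eq_zero.mp (htf _ hn_smul)

theorem AddMonoidHom.apply_eq_neg_of_comp_eq_neg_two_smul {Λ M : Type*} [AddCommGroup Λ]
    [AddCommGroup M] (σ : AddMonoid.End M) (Φ : Λ →+ M) (Ψ : M →+ Λ)
    (hΨΦ : ∀ x : Λ, Ψ (Φ x) = -(2 • x)) (hΦΨ : ∀ m : M, Φ (Ψ m) = σ m - m) (x : Λ) :
    σ (Φ x) = -Φ x :=
  calc σ (Φ x) = (σ (Φ x) - Φ x) + Φ x := (sub_add_cancel _ _).symm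
    _ = -Φ x := by rw [← hΦΨ, hΨΦ, map_neg, two_smul, map_add]; abel

theorem abelJacobi_injective_range_eq_prym_general
    {Λ M : Type*} [AddCommGroup Λ] [AddCommGroup M]
    (htf : ∀ (n : ℤ) (x : Λ), n • x = 0 → n = 0 ∨ x = 0)
    (σ : AddMonoid.End M)
    (Φ : Λ →+ M) (Ψ : M →+ Λ)
    (hΨΦ : ∀ x : Λ, Ψ (Φ x) = -(2 • x))
    (hΦΨ : ∀ m : M, Φ (Ψ m) = σ m - m)
    (hH1 : ∀ m : M, σ m = -m ↔ m ∈ AddMonoidHom.range (σ - 1 : AddMonoid.End M)) :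
    Function.Injective Φ ∧
      Φ.range = AddMonoidHom.range (σ - 1 : AddMonoid.End M) := by
  refine ⟨Φ.injective_of_comp_eq_zsmul (n := -2)
    (fun x hx => (htf _ x hx).resolve_left (by decide)) Ψ
    (fun x => by rw [hΨΦ, neg_smul, two_smul, two_smul]), ?_⟩
  apply le_antisymm
  · rintro _ ⟨x, rfl⟩
    exact (hH1 _).mp (Φ.apply_eq_neg_of_comp_eq_neg_two_smul σ Ψ hΨΦ hΦΨ x)
  · rintro _ ⟨m, rfl⟩
    exact ⟨Ψ m, hΦΨ m⟩

/-- Let `Λ` be a torsion-free abelian group, `M` an abelian group with an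
additive involution `σ`, and `Φ : Λ → M`, `Ψ : M → Λ` group homomorphisms with
`Ψ ∘ Φ = −2·id` and `Φ ∘ Ψ = σ − id`.  Assume `{m : σm = −m} = (σ − 1)M`.  Then `Φ` is
injective and its image equals the Prym part `Pr(M, σ) = (σ − 1)M`. -/
theorem abelJacobi_injective_range_eq_prym
    {Λ M : Type*} [AddCommGroup Λ] [AddCommGroup M]
    (htf : ∀ (n : ℤ) (x : Λ), n • x = 0 → n = 0 ∨ x = 0)
    (σ : AddMonoid.End M) (hσ : σ * σ = 1)
    (Φ : Λ →+ M) (Ψ : M →+ Λ)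
    (hΨΦ : ∀ x : Λ, Ψ (Φ x) = -(2 • x))
    (hΦΨ : ∀ m : M, Φ (Ψ m) = σ m - m)
    (hH1 : ∀ m : M, σ m = -m ↔ m ∈ AddMonoidHom.range (σ - 1 : AddMonoid.End M)) :
    Function.Injective Φ ∧
      Φ.range = AddMonoidHom.range (σ - 1 : AddMonoid.End M) :=
  abelJacobi_injective_range_eq_prym_general htf σ Φ Ψ hΨΦ hΦΨ hH1
end

section
/- Let A be an abelian group, B a torsion-free divisible abelian group (hence uniquely divisible) with an additive involution σ, and Φ : A → B, Ψ : B → A group homomorphisms satisfying Ψ ∘ Φ = −2·id_A and Φ ∘ Ψ = σ − id_B. Then: (1) ker Φ = A[2] = {a ∈ A : 2a = 0}; (2) the image of Φ equals Pr(B, σ) = (σ − 1)B = {b ∈ B : σb = −b}; (3) the map s : Pr(B, σ) → A defined by s(b) = Ψ(−b/2), where −b/2 is the unique element of B with 2·(−b/2) = −b, is a group homomorphism with Φ ∘ s = id, and A is the internal direct sum A = s(Pr(B, σ)) ⊕ A[2]. In particular A ≅ Pr(B, σ) ⊕ A[2] with Φ corresponding to the projection onto the first factor. -/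
/-!
Doubling is an automorphism of `B`, so halving makes sense. Since `Φ ∘ Ψ = σ - 1`, the image of
`Φ` contains `(σ - 1)B`, and `Φ (Ψ (Φ a)) = -2 Φ a` forces `σ` to act by `-1` on `Φ A`; on a
uniquely `2`-divisible group the `(-1)`-eigenspace of an involution is exactly `(σ - 1)B`.
Halving then gives the section `s y = Ψ (-y/2)` of `Φ` onto its image, and since
`Ψ ∘ Φ = -2` the kernel of `Φ` is `A[2]`, which splits `A`.
-/

open Function

section Halving

variable {B : Type*} [AddCommGroup B]

theorem bijective_nsmulAddMonoidHom_two
    (htf : ∀ (n : ℤ) (b : B), n • b = 0 → n = 0 ∨ b = 0)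
    (hdiv : ∀ (n : ℤ) (b : B), n ≠ 0 → ∃ c : B, n • c = b) :
    Bijective (nsmulAddMonoidHom 2 : B →+ B) := by
  refine ⟨fun b c hbc => ?_, fun b => ?_⟩
  · have hzero : (2 : ℤ) • (b - c) = 0 := by
      simpa [smul_sub, sub_eq_zero, two_zsmul, two_nsmul] using hbc
    exact sub_eq_zero.mp ((htf 2 _ hzero).resolve_left two_ne_zero)
  · obtain ⟨c, hc⟩ := hdiv 2 b two_ne_zero
    exact ⟨c, by simpa [two_zsmul, two_nsmul] using hc⟩

theorem sub_eq_of_two_nsmul_eq_neg (h2 : Injective (nsmulAddMonoidHom 2 : B →+ B))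
    (σ : AddMonoid.End B) {b c : B} (hb : σ b = -b) (hc : 2 • c = -b) : σ c - c = b :=
  h2 <| by
    change 2 • (σ c - c) = 2 • b
    rw [nsmul_sub, ← map_nsmul, hc, map_neg, hb, neg_neg, sub_neg_eq_add, two_nsmul]

theorem mem_range_sub_one_iff (h2 : Bijective (nsmulAddMonoidHom 2 : B →+ B))
    {σ : AddMonoid.End B} (hσ : σ * σ = 1) (b : B) :
    b ∈ AddMonoidHom.range (σ - 1 : AddMonoid.End B) ↔ σ b = -b := by
  constructor
  · rintro ⟨c, rfl⟩
    have hσσ : σ (σ c) = c := DFunLike.congr_fun hσ c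
    change σ (σ c - c) = -(σ c - c)
    rw [map_sub, hσσ, neg_sub]
  · intro hb
    obtain ⟨c, hc⟩ := h2.2 (-b)
    exact ⟨c, sub_eq_of_two_nsmul_eq_neg h2.1 σ hb hc⟩

end Halving

section Decomposition

variable {A B : Type*} [AddCommGroup A] [AddCommGroup B]

theorem apply_eq_zero_iff_two_nsmul_eq_zero (h2 : Injective (nsmulAddMonoidHom 2 : B →+ B))
    {Φ : A →+ B} {Ψ : B →+ A} (hΨΦ : ∀ a : A, Ψ (Φ a) = -(2 • a)) (a : A) :
    Φ a = 0 ↔ 2 • a = 0 := by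
  constructor
  · intro ha
    simpa [ha] using (hΨΦ a).symm
  · intro ha
    apply h2
    change 2 • Φ a = 2 • 0
    rw [← map_nsmul, ha, map_zero, smul_zero]

theorem range_eq_range_sub_one (h2 : Bijective (nsmulAddMonoidHom 2 : B →+ B))
    {σ : AddMonoid.End B} (hσ : σ * σ = 1) {Φ : A →+ B} {Ψ : B →+ A}
    (hΨΦ : ∀ a : A, Ψ (Φ a) = -(2 • a)) (hΦΨ : ∀ b : B, Φ (Ψ b) = σ b - b) :
    Φ.range = AddMonoidHom.range (σ - 1 : AddMonoid.End B) := by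
  ext b
  constructor
  · rintro ⟨a, rfl⟩
    rw [mem_range_sub_one_iff h2 hσ]
    have h := hΦΨ (Φ a)
    rw [hΨΦ, map_neg, map_nsmul, two_nsmul] at h
    rw [← eq_sub_iff_add_eq.mp h]
    abel
  · rintro ⟨c, rfl⟩
    exact ⟨Ψ c, hΦΨ c⟩

/-- The section `y ↦ Ψ (-y / 2)` of `Φ`, restricted to a subgroup `P` of `B`. -/
noncomputable def prymSection (Ψ : B →+ A) (h2 : Bijective (nsmulAddMonoidHom 2 : B →+ B))
    (P : AddSubgroup B) : P →+ A :=
  -(Ψ.comp ((AddEquiv.ofBijective _ h2).symm.toAddMonoidHom.comp P.subtype))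

theorem prymSection_apply_of_two_nsmul_eq (Ψ : B →+ A)
    (h2 : Bijective (nsmulAddMonoidHom 2 : B →+ B)) {P : AddSubgroup B} (y : P) {c : B}
    (hc : 2 • c = -(y : B)) : prymSection Ψ h2 P y = Ψ c := by
  have hhalf : (AddEquiv.ofBijective _ h2).symm (y : B) = -c :=
    (AddEquiv.symm_apply_eq _).mpr (by simp [hc])
  simp [prymSection, hhalf]

theorem apply_prymSection {σ : AddMonoid.End B} {Φ : A →+ B} {Ψ : B →+ A}
    (hΦΨ : ∀ b : B, Φ (Ψ b) = σ b - b) (h2 : Bijective (nsmulAddMonoidHom 2 : B →+ B))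
    {P : AddSubgroup B} (hP : ∀ y ∈ P, σ y = -y) (y : P) :
    Φ (prymSection Ψ h2 P y) = y := by
  obtain ⟨c, hc⟩ := h2.2 (-(y : B))
  rw [prymSection_apply_of_two_nsmul_eq Ψ h2 y hc, hΦΨ]
  exact sub_eq_of_two_nsmul_eq_neg h2.1 σ (hP y y.2) hc

end Decomposition

/-- Let `A` be an abelian group, `B` a torsion-free divisible abelian
group with an additive involution `σ`, and `Φ : A → B`, `Ψ : B → A` group homomorphisms
with `Ψ ∘ Φ = −2·id` and `Φ ∘ Ψ = σ − id`.  Then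
(1) `ker Φ = A[2]`;
(2) the image of `Φ` equals `Pr(B, σ) = (σ − 1)B = {b : σb = −b}`;
(3) the map `s : Pr(B, σ) → A`, `s(b) = Ψ(−b/2)`, is a group homomorphism with
    `Φ ∘ s = id`, and `A` is the internal direct sum `s(Pr(B, σ)) ⊕ A[2]`,
so that `A ≅ Pr(B, σ) ⊕ A[2]` with `Φ` corresponding to the first projection. -/
theorem chow_group_prym_decomposition
    {A B : Type*} [AddCommGroup A] [AddCommGroup B]
    (htf : ∀ (n : ℤ) (b : B), n • b = 0 → n = 0 ∨ b = 0)
    (hdiv : ∀ (n : ℤ) (b : B), n ≠ 0 → ∃ c : B, n • c = b)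
    (σ : AddMonoid.End B) (hσ : σ * σ = 1)
    (Φ : A →+ B) (Ψ : B →+ A)
    (hΨΦ : ∀ a : A, Ψ (Φ a) = -(2 • a))
    (hΦΨ : ∀ b : B, Φ (Ψ b) = σ b - b) :
    (∀ a : A, Φ a = 0 ↔ 2 • a = 0) ∧
    (Φ.range = AddMonoidHom.range (σ - 1 : AddMonoid.End B) ∧
      ∀ b : B, b ∈ AddMonoidHom.range (σ - 1 : AddMonoid.End B) ↔ σ b = -b) ∧
    (∃ s : (AddMonoidHom.range (σ - 1 : AddMonoid.End B)) →+ A,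
      (∀ (y : (AddMonoidHom.range (σ - 1 : AddMonoid.End B))) (c : B),
        2 • c = -(y : B) → s y = Ψ c) ∧
      (∀ y, Φ (s y) = (y : B)) ∧
      (∀ a : A, ∃ y t, 2 • t = 0 ∧ a = s y + t) ∧
      (∀ a : A, (∃ y, s y = a) → 2 • a = 0 → a = 0)) := by
  have h2 := bijective_nsmulAddMonoidHom_two htf hdiv
  have hker := apply_eq_zero_iff_two_nsmul_eq_zero h2.1 hΨΦ
  have hrange := range_eq_range_sub_one h2 hσ hΨΦ hΦΨ
  have hchar := mem_range_sub_one_iff h2 hσ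
  set s := prymSection Ψ h2 (AddMonoidHom.range (σ - 1 : AddMonoid.End B))
  have hΦs : ∀ y, Φ (s y) = y := apply_prymSection hΦΨ h2 fun y hy => (hchar y).mp hy
  refine ⟨hker, ⟨hrange, hchar⟩, s, fun y c => prymSection_apply_of_two_nsmul_eq Ψ h2 y,
    hΦs, fun a => ?_, ?_⟩
  · let y : AddMonoidHom.range (σ - 1 : AddMonoid.End B) := ⟨Φ a, hrange ▸ ⟨a, rfl⟩⟩
    refine ⟨y, a - s y, (hker _).mp ?_, (add_sub_cancel _ _).symm⟩
    rw [map_sub, hΦs, sub_self]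
  · rintro _ ⟨y, rfl⟩ h2y
    have hy : y = 0 := Subtype.ext (by rw [← hΦs, (hker _).mpr h2y]; rfl)
    rw [hy, map_zero]
end

section
/- Let Λ be a finitely generated free ℤ-module with a nondegenerate symmetric bilinear form b and an isometric involution σ, and let M ⊆ Λ be a σ-invariant submodule on which b is nondegenerate, with orthogonal complement M^⊥. Assume the finite quotient Q = Λ/(M ⊕ M^⊥) has no element of order 2. Then M^{σ=−1} ⊕ (M^⊥)^{σ=−1} is a finite-index submodule of Λ^{σ=−1} of index q = |Q^{σ=−1}|, and the Gram determinants of the restricted forms satisfy det(M^{σ=−1}) · det((M^⊥)^{σ=−1}) = q² · det(Λ^{σ=−1}), where N^{σ=−1} = {x ∈ N : σx = −x}. -/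
/-- The orthogonal complement `M^⊥ = {x : b(x, m) = 0 for all m ∈ M}`. -/
def orthoComp {Λ : Type*} [AddCommGroup Λ] [Module ℤ Λ]
    (b : Λ →ₗ[ℤ] Λ →ₗ[ℤ] ℤ) (M : Submodule ℤ Λ) : Submodule ℤ Λ where
  carrier := {x | ∀ m ∈ M, b x m = 0}
  add_mem' := by
    intro a c ha hc m hm
    simp [ha m hm, hc m hm]
  zero_mem' := by
    intro m hm
    simp
  smul_mem' := by
    intro n x hx m hm
    simp [hx m hm]

/-!
Write `K = Λ^{σ=-1}`, `D = M ⊕ M^⊥` and `Q = Λ/D`; `Q` is finite because `b` is nondegenerate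
on `M`. Since `M` and `M^⊥` are `σ`-stable and meet trivially, `D ∩ K = M^{σ=-1} ⊕ (M^⊥)^{σ=-1}`,
so `K / (M^{σ=-1} ⊕ (M^⊥)^{σ=-1})` embeds into `Q^{σ=-1}`. The embedding is onto because
doubling is bijective on `Q`: an anti-invariant class `y = 2z` equals `z - σz`, the class of
`x - σx ∈ K` for any lift `x` of `z`. Hence the index is `q`, and the determinant identity is
the index formula `disc(N) = [L : N]² disc(L)` for the sublattice
`N = M^{σ=-1} ⊕ (M^⊥)^{σ=-1}` of `L = K`, whose Gram matrix is block triangular.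
-/

open Module Matrix

section Gram

variable {R L ι κ : Type*} [CommRing R] [AddCommGroup L] [Module R L]

def gramMatrix (B : L →ₗ[R] L →ₗ[R] R) (v : ι → L) : Matrix ι ι R :=
  Matrix.of fun i j => B (v i) (v j)

theorem gramMatrix_comp_equiv (B : L →ₗ[R] L →ₗ[R] R) (v : ι → L) (e : κ ≃ ι) :
    gramMatrix B (v ∘ e) = (gramMatrix B v).submatrix e e := rfl

theorem gramMatrix_eq_transpose_mul_mul [Fintype κ] (B : L →ₗ[R] L →ₗ[R] R) (e : Basis κ R L)
    (v : ι → L) :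
    gramMatrix B v = (e.toMatrix v)ᵀ * gramMatrix B e * e.toMatrix v := by
  ext i j
  conv_lhs => rw [gramMatrix, Matrix.of_apply, ← e.sum_repr (v i), ← e.sum_repr (v j)]
  simp only [map_sum, map_smul, LinearMap.sum_apply, LinearMap.smul_apply, smul_eq_mul,
    Matrix.mul_apply, Matrix.transpose_apply, Basis.toMatrix_apply, gramMatrix, Matrix.of_apply,
    Finset.sum_mul, Finset.mul_sum]
  exact Finset.sum_congr rfl fun k _ => Finset.sum_congr rfl fun l _ => by ring

theorem det_gramMatrix_sumElim [Fintype ι] [Fintype κ] [DecidableEq ι] [DecidableEq κ]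
    (B : L →ₗ[R] L →ₗ[R] R) (u : ι → L) (v : κ → L) (hvu : ∀ i j, B (v j) (u i) = 0) :
    (gramMatrix B (Sum.elim u v)).det = (gramMatrix B u).det * (gramMatrix B v).det := by
  have : gramMatrix B (Sum.elim u v) = Matrix.fromBlocks (gramMatrix B u)
      (Matrix.of fun i j => B (u i) (v j)) 0 (gramMatrix B v) := by
    ext (i | j) (i' | j') <;> simp [gramMatrix, hvu]
  rw [this, Matrix.det_fromBlocks_zero₂₁]

end Gram

section Index

variable {L ι κ : Type*} [AddCommGroup L] [Fintype ι] [Fintype κ] [DecidableEq ι] [DecidableEq κ]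

theorem det_gramMatrix_eq_card_sq_mul (B : L →ₗ[ℤ] L →ₗ[ℤ] ℤ) (e : Basis κ ℤ L)
    (N : Submodule ℤ L) [Finite (L ⧸ N)] (eN : Basis ι ℤ N) :
    (gramMatrix B (N.subtype ∘ eN)).det = Nat.card (L ⧸ N) ^ 2 * (gramMatrix B e).det := by
  have := Module.Free.of_basis e
  have := Module.Finite.of_basis e
  have hcard : Fintype.card κ = Fintype.card ι := by
    rw [← finrank_eq_card_basis e, ← finrank_eq_card_basis eN,
      (Submodule.finiteQuotient_iff N).mp ‹_›]
  let e' := e.reindex (Fintype.equivOfCardEq hcard)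
  have hdet : (gramMatrix B e').det = (gramMatrix B e).det := by
    rw [e.coe_reindex, gramMatrix_comp_equiv, det_submatrix_equiv_self]
  rw [gramMatrix_eq_transpose_mul_mul B e', det_mul, det_mul, det_transpose, hdet,
    ← Submodule.natAbs_det_basis_change e' N eN, e'.det_apply, Int.natAbs_sq,
    Submodule.coe_subtype]
  ring

theorem det_gramMatrix_eq_card_sq_mul_of_le {Λ : Type*} [AddCommGroup Λ]
    (b : Λ →ₗ[ℤ] Λ →ₗ[ℤ] ℤ) {N L : Submodule ℤ Λ} (hNL : N ≤ L)
    [Finite (L ⧸ N.comap L.subtype)] (eN : Basis ι ℤ N) (eL : Basis κ ℤ L) :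
    (gramMatrix b (N.subtype ∘ eN)).det =
      Nat.card (L ⧸ N.comap L.subtype) ^ 2 * (gramMatrix b (L.subtype ∘ eL)).det :=
  det_gramMatrix_eq_card_sq_mul (b.domRestrict₁₂ L L) eL _
    (eN.map (Submodule.comapSubtypeEquivOfLe hNL).symm)

end Index

section Sup

variable {R Λ ι κ : Type*} [Ring R] [AddCommGroup Λ] [Module R Λ] {A B : Submodule R Λ}

noncomputable def Submodule.prodEquivSupOfDisjoint (h : Disjoint A B) : (A × B) ≃ₗ[R] ↥(A ⊔ B) :=
  have hinj : Function.Injective (A.subtype.coprod B.subtype) := by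
    rw [← LinearMap.ker_eq_bot, LinearMap.ker_coprod_of_disjoint_range _ _ (by simpa using h)]
    simp
  (LinearEquiv.ofInjective _ hinj).trans
    (LinearEquiv.ofEq _ _ (by rw [LinearMap.range_coprod, Submodule.range_subtype,
      Submodule.range_subtype]))

@[simp]
theorem Submodule.coe_prodEquivSupOfDisjoint_apply (h : Disjoint A B) (x : A × B) :
    (Submodule.prodEquivSupOfDisjoint h x : Λ) = x.1 + x.2 := rfl

noncomputable def Module.Basis.supOfDisjoint (h : Disjoint A B) (vA : Basis ι R A)
    (vB : Basis κ R B) : Basis (ι ⊕ κ) R ↥(A ⊔ B) :=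
  (vA.prod vB).map (Submodule.prodEquivSupOfDisjoint h)

theorem Module.Basis.subtype_comp_supOfDisjoint (h : Disjoint A B) (vA : Basis ι R A)
    (vB : Basis κ R B) :
    (A ⊔ B).subtype ∘ vA.supOfDisjoint h vB = Sum.elim (A.subtype ∘ vA) (B.subtype ∘ vB) := by
  ext (i | j) <;> simp [Module.Basis.supOfDisjoint]

end Sup

section AntiInvariant

variable {R Λ : Type*} [Ring R] [AddCommGroup Λ] [Module R Λ]

theorem Submodule.sup_inf_ker_add_id {σ : Λ →ₗ[R] Λ} {M P : Submodule R Λ}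
    (hM : M ≤ M.comap σ) (hP : P ≤ P.comap σ) (hMP : Disjoint M P) :
    (M ⊔ P) ⊓ LinearMap.ker (σ + LinearMap.id) =
      M ⊓ LinearMap.ker (σ + LinearMap.id) ⊔ P ⊓ LinearMap.ker (σ + LinearMap.id) := by
  refine le_antisymm ?_ (sup_le (inf_le_inf_right _ le_sup_left)
    (inf_le_inf_right _ le_sup_right))
  rintro x ⟨hx, hxK⟩
  obtain ⟨m, hm, p, hp, rfl⟩ := Submodule.mem_sup.mp hx
  have hσmp : (σ m + m) + (σ p + p) = 0 := by
    simpa [add_add_add_comm] using hxK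
  have hm0 : σ m + m = 0 := by
    refine Submodule.disjoint_def.mp hMP _ (add_mem (hM hm) hm) ?_
    rw [eq_neg_of_add_eq_zero_left hσmp]
    exact neg_mem (add_mem (hP hp) hp)
  have hp0 : σ p + p = 0 := by rwa [hm0, zero_add] at hσmp
  exact Submodule.add_mem_sup ⟨hm, hm0⟩ ⟨hp, hp0⟩

theorem exists_sub_eq_of_map_eq_neg {Q : Type*} [AddCommGroup Q] [Finite Q]
    (h2 : ∀ y : Q, 2 • y = 0 → y = 0) (τ : Q →+ Q) {y : Q} (hy : τ y = -y) :
    ∃ z, z - τ z = y := by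
  have hinj : Function.Injective (fun z : Q => 2 • z) := fun z w hzw =>
    sub_eq_zero.mp (h2 _ (by rw [smul_sub]; exact sub_eq_zero.mpr hzw))
  obtain ⟨z, rfl⟩ := Finite.surjective_of_injective hinj y
  have hz : τ z = -z := hinj (by simpa [map_nsmul] using hy)
  exact ⟨z, by rw [hz, sub_neg_eq_add, ← two_nsmul]⟩

theorem Submodule.card_quotient_comap_ker_add_id {σ : Λ →ₗ[R] Λ} (hσ : ∀ x, σ (σ x) = x)
    {D : Submodule R Λ} (hD : D ≤ D.comap σ) [Finite (Λ ⧸ D)]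
    (h2 : ∀ y : Λ ⧸ D, 2 • y = 0 → y = 0) :
    Nat.card (LinearMap.ker (σ + LinearMap.id) ⧸
        D.comap (LinearMap.ker (σ + LinearMap.id)).subtype) =
      Nat.card {y : Λ ⧸ D // D.mapQ D σ hD y = -y} := by
  set K := LinearMap.ker (σ + LinearMap.id)
  have hK : ∀ x, x ∈ K ↔ σ x = -x := fun x => by
    simp [K, add_eq_zero_iff_eq_neg]
  let φ : K →ₗ[R] Λ ⧸ D := D.mkQ ∘ₗ K.subtype
  have hker : LinearMap.ker φ = D.comap K.subtype := by
    rw [LinearMap.ker_comp, Submodule.ker_mkQ]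
  have hrange : ∀ y, y ∈ LinearMap.range φ ↔ D.mapQ D σ hD y = -y := by
    intro y
    constructor
    · rintro ⟨x, rfl⟩
      simp [φ, (hK x).mp x.2]
    · intro hy
      obtain ⟨z, hz⟩ := exists_sub_eq_of_map_eq_neg h2 (D.mapQ D σ hD).toAddMonoidHom hy
      obtain ⟨x, rfl⟩ := D.mkQ_surjective z
      refine ⟨⟨x - σ x, (hK _).mpr (by simp [hσ])⟩, ?_⟩
      simpa [φ] using hz
  rw [← hker, Nat.card_congr (LinearMap.quotKerEquivRange φ).toEquiv]
  exact Nat.card_congr (Equiv.subtypeEquivRight hrange)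

end AntiInvariant

section Orthogonal

variable {Λ ι : Type*} [AddCommGroup Λ] (b : Λ →ₗ[ℤ] Λ →ₗ[ℤ] ℤ) {M : Submodule ℤ Λ}

theorem mem_orthoComp_iff_of_basis (e : Basis ι ℤ M) {x : Λ} :
    x ∈ orthoComp b M ↔ ∀ i, b x (e i) = 0 := by
  refine ⟨fun hx i => hx _ (e i).2, fun hx m hm => ?_⟩
  have : (b x).domRestrict M = 0 := e.ext hx
  exact LinearMap.congr_fun this ⟨m, hm⟩

theorem orthoComp_le_comap {σ : Λ →ₗ[ℤ] Λ} (hσ : ∀ x, σ (σ x) = x)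
    (hisom : ∀ x y, b (σ x) (σ y) = b x y) (hM : M ≤ M.comap σ) :
    orthoComp b M ≤ (orthoComp b M).comap σ := fun x hx m hm => by
  rw [← hσ m, hisom]
  exact hx _ (hM hm)

theorem disjoint_orthoComp (hMnd : ∀ x ∈ M, (∀ y ∈ M, b x y = 0) → x = 0) :
    Disjoint M (orthoComp b M) :=
  Submodule.disjoint_def.mpr fun x hxM hxP => hMnd x hxM hxP

variable [Fintype ι] [DecidableEq ι]

theorem det_gramMatrix_ne_zero (hMnd : ∀ x ∈ M, (∀ y ∈ M, b x y = 0) → x = 0)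
    (e : Basis ι ℤ M) : (gramMatrix b (M.subtype ∘ e)).det ≠ 0 := by
  have hsep : (b.domRestrict₁₂ M M).SeparatingLeft := fun x hx =>
    Subtype.ext (hMnd x x.2 fun y hy => hx ⟨y, hy⟩)
  have hG : LinearMap.toMatrix₂ e e (b.domRestrict₁₂ M M) = gramMatrix b (M.subtype ∘ e) := by
    ext i j
    simp [LinearMap.toMatrix₂_apply, gramMatrix, LinearMap.domRestrict₁₂_apply]
  rw [← hG]
  exact (LinearMap.separatingLeft_iff_det_ne_zero e).mp hsep

/-- Cramer's rule produces `m ∈ M` with `b m (e i) = det G * b x (e i)` for all `i`,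
so that `det G • x - m ∈ M^⊥`. -/
theorem det_gramMatrix_smul_mem_sup_orthoComp (e : Basis ι ℤ M) (x : Λ) :
    (gramMatrix b (M.subtype ∘ e)).det • x ∈ M ⊔ orthoComp b M := by
  set G := gramMatrix b (M.subtype ∘ e)
  let c := cramer Gᵀ fun i => b x (e i)
  let m : Λ := ∑ j, c j • (e j : Λ)
  have hm : ∀ i, b m (e i) = G.det * b x (e i) := fun i => by
    have := congr_fun (mulVec_cramer Gᵀ fun i => b x (e i)) i
    simpa [m, c, mulVec, dotProduct, G, gramMatrix, mul_comm] using this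
  have hmM : m ∈ M := sum_mem fun j _ => M.smul_mem _ (e j).2
  have hrest : G.det • x - m ∈ orthoComp b M :=
    (mem_orthoComp_iff_of_basis b e).mpr fun i => by simp [hm]
  simpa using Submodule.add_mem_sup hmM hrest

end Orthogonal

theorem finite_quotient_sup_orthoComp {Λ : Type*} [AddCommGroup Λ] [Module.Free ℤ Λ]
    [Module.Finite ℤ Λ] (b : Λ →ₗ[ℤ] Λ →ₗ[ℤ] ℤ) {M : Submodule ℤ Λ}
    (hMnd : ∀ x ∈ M, (∀ y ∈ M, b x y = 0) → x = 0) :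
    Finite (Λ ⧸ (M ⊔ orthoComp b M)) := by
  let e := Module.Free.chooseBasis ℤ M
  refine Module.finite_of_fg_torsion _ fun y => ?_
  obtain ⟨x, rfl⟩ := Submodule.mkQ_surjective _ y
  refine ⟨⟨_, mem_nonZeroDivisors_of_ne_zero (det_gramMatrix_ne_zero b hMnd e)⟩, ?_⟩
  rw [Submonoid.mk_smul, ← map_zsmul, Submodule.mkQ_apply, Submodule.Quotient.mk_eq_zero]
  exact det_gramMatrix_smul_mem_sup_orthoComp b e x

theorem det_antiInvariants_identity_general
    {Λ : Type*} [AddCommGroup Λ] [Module.Free ℤ Λ] [Module.Finite ℤ Λ]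
    (b : Λ →ₗ[ℤ] Λ →ₗ[ℤ] ℤ)
    (σ : Λ →ₗ[ℤ] Λ) (hσ : ∀ x, σ (σ x) = x)
    (hisom : ∀ x y, b (σ x) (σ y) = b x y)
    (M : Submodule ℤ Λ) (hMσ : ∀ x ∈ M, σ x ∈ M)
    (hMnd : ∀ x ∈ M, (∀ y ∈ M, b x y = 0) → x = 0)
    (hD : M ⊔ orthoComp b M ≤ (M ⊔ orthoComp b M).comap σ)
    (hno2 : ∀ y : Λ ⧸ (M ⊔ orthoComp b M), 2 • y = 0 → y = 0) :
    -- the anti-invariant parts of `M` and of `M^⊥` intersect trivially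
    (M ⊓ LinearMap.ker (σ + LinearMap.id)) ⊓
        (orthoComp b M ⊓ LinearMap.ker (σ + LinearMap.id)) = ⊥ ∧
    -- their sum has finite index `q = |Q^{σ=−1}|` in `Λ^{σ=−1}`
    Nat.card
        ((LinearMap.ker (σ + LinearMap.id) : Submodule ℤ Λ) ⧸
          (Submodule.comap (LinearMap.ker (σ + LinearMap.id)).subtype
            ((M ⊓ LinearMap.ker (σ + LinearMap.id)) ⊔
              (orthoComp b M ⊓ LinearMap.ker (σ + LinearMap.id))))) =
      Nat.card {y : Λ ⧸ (M ⊔ orthoComp b M) //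
          Submodule.mapQ (M ⊔ orthoComp b M) (M ⊔ orthoComp b M) σ hD y = -y} ∧
    Nat.card {y : Λ ⧸ (M ⊔ orthoComp b M) //
        Submodule.mapQ (M ⊔ orthoComp b M) (M ⊔ orthoComp b M) σ hD y = -y} ≠ 0 ∧
    -- the determinant identity, for arbitrary bases of the three anti-invariant lattices
    ∀ (m1 m2 m3 : ℕ)
      (vM : Module.Basis (Fin m1) ℤ (M ⊓ LinearMap.ker (σ + LinearMap.id) : Submodule ℤ Λ))
      (vP : Module.Basis (Fin m2) ℤ
        (orthoComp b M ⊓ LinearMap.ker (σ + LinearMap.id) : Submodule ℤ Λ))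
      (vE : Module.Basis (Fin m3) ℤ (LinearMap.ker (σ + LinearMap.id) : Submodule ℤ Λ)),
      (Matrix.of fun i j => b (vM i : Λ) (vM j : Λ)).det *
          (Matrix.of fun i j => b (vP i : Λ) (vP j : Λ)).det =
        (Nat.card {y : Λ ⧸ (M ⊔ orthoComp b M) //
            Submodule.mapQ (M ⊔ orthoComp b M) (M ⊔ orthoComp b M) σ hD y = -y} : ℤ) ^ 2 *
          (Matrix.of fun i j => b (vE i : Λ) (vE j : Λ)).det := by
  set K := LinearMap.ker (σ + LinearMap.id)
  set D := M ⊔ orthoComp b M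
  have hdisj := disjoint_orthoComp b hMnd
  have hAB : Disjoint (M ⊓ K) (orthoComp b M ⊓ K) := hdisj.mono inf_le_left inf_le_left
  have hQ : Finite (Λ ⧸ D) := finite_quotient_sup_orthoComp b hMnd
  have hcard : Nat.card (K ⧸ (M ⊓ K ⊔ orthoComp b M ⊓ K).comap K.subtype) =
      Nat.card {y : Λ ⧸ D // D.mapQ D σ hD y = -y} := by
    rw [← Submodule.sup_inf_ker_add_id hMσ (orthoComp_le_comap b hσ hisom hMσ) hdisj,
      Submodule.comap_inf, Submodule.comap_subtype_self, inf_top_eq]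
    exact Submodule.card_quotient_comap_ker_add_id hσ hD hno2
  have hq : Nat.card {y : Λ ⧸ D // D.mapQ D σ hD y = -y} ≠ 0 :=
    Nat.card_ne_zero.mpr ⟨⟨⟨0, by simp⟩⟩, Subtype.finite⟩
  refine ⟨disjoint_iff.mp hAB, hcard, hq, fun m1 m2 m3 vM vP vE => ?_⟩
  have hKfin := Nat.finite_of_card_ne_zero (hcard ▸ hq)
  have hblock := det_gramMatrix_sumElim b (Submodule.subtype _ ∘ vM) (Submodule.subtype _ ∘ vP)
    fun i j => (vP j).2.1 _ (vM i).2.1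
  have hindex := det_gramMatrix_eq_card_sq_mul_of_le b (sup_le inf_le_right inf_le_right)
    (vM.supOfDisjoint hAB vP) vE
  rwa [Module.Basis.subtype_comp_supOfDisjoint, hblock, hcard] at hindex

/-- Let `Λ` be a finitely generated free `ℤ`-module with a nondegenerate
symmetric bilinear form `b` and an isometric involution `σ`, and `M ⊆ Λ` a
`σ`-invariant submodule on which `b` is nondegenerate, with orthogonal complement
`M^⊥`.  Assume the quotient `Q = Λ/(M ⊕ M^⊥)` (with its induced involution) has no
element of order 2.  Then `M^{σ=−1} ⊕ (M^⊥)^{σ=−1}` is a finite-index submodule of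
`Λ^{σ=−1}` of index `q = |Q^{σ=−1}|`, and the Gram determinants of the restricted
forms satisfy `det(M^{σ=−1}) · det((M^⊥)^{σ=−1}) = q² · det(Λ^{σ=−1})`. -/
theorem det_antiInvariants_identity
    {Λ : Type*} [AddCommGroup Λ] [Module.Free ℤ Λ] [Module.Finite ℤ Λ]
    (b : Λ →ₗ[ℤ] Λ →ₗ[ℤ] ℤ) (hbsymm : ∀ x y, b x y = b y x)
    (hbnd : ∀ x : Λ, (∀ y, b x y = 0) → x = 0)
    (σ : Λ →ₗ[ℤ] Λ) (hσ : ∀ x, σ (σ x) = x)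
    (hisom : ∀ x y, b (σ x) (σ y) = b x y)
    (M : Submodule ℤ Λ) (hMσ : ∀ x ∈ M, σ x ∈ M)
    (hMnd : ∀ x ∈ M, (∀ y ∈ M, b x y = 0) → x = 0)
    (hD : M ⊔ orthoComp b M ≤ (M ⊔ orthoComp b M).comap σ)
    (hno2 : ∀ y : Λ ⧸ (M ⊔ orthoComp b M), 2 • y = 0 → y = 0) :
    -- the anti-invariant parts of `M` and of `M^⊥` intersect trivially
    (M ⊓ LinearMap.ker (σ + LinearMap.id)) ⊓
        (orthoComp b M ⊓ LinearMap.ker (σ + LinearMap.id)) = ⊥ ∧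
    -- their sum has finite index `q = |Q^{σ=−1}|` in `Λ^{σ=−1}`
    Nat.card
        ((LinearMap.ker (σ + LinearMap.id) : Submodule ℤ Λ) ⧸
          (Submodule.comap (LinearMap.ker (σ + LinearMap.id)).subtype
            ((M ⊓ LinearMap.ker (σ + LinearMap.id)) ⊔
              (orthoComp b M ⊓ LinearMap.ker (σ + LinearMap.id))))) =
      Nat.card {y : Λ ⧸ (M ⊔ orthoComp b M) //
          Submodule.mapQ (M ⊔ orthoComp b M) (M ⊔ orthoComp b M) σ hD y = -y} ∧
    Nat.card {y : Λ ⧸ (M ⊔ orthoComp b M) //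
        Submodule.mapQ (M ⊔ orthoComp b M) (M ⊔ orthoComp b M) σ hD y = -y} ≠ 0 ∧
    -- the determinant identity, for arbitrary bases of the three anti-invariant lattices
    ∀ (m1 m2 m3 : ℕ)
      (vM : Module.Basis (Fin m1) ℤ (M ⊓ LinearMap.ker (σ + LinearMap.id) : Submodule ℤ Λ))
      (vP : Module.Basis (Fin m2) ℤ
        (orthoComp b M ⊓ LinearMap.ker (σ + LinearMap.id) : Submodule ℤ Λ))
      (vE : Module.Basis (Fin m3) ℤ (LinearMap.ker (σ + LinearMap.id) : Submodule ℤ Λ)),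
      (Matrix.of fun i j => b (vM i : Λ) (vM j : Λ)).det *
          (Matrix.of fun i j => b (vP i : Λ) (vP j : Λ)).det =
        (Nat.card {y : Λ ⧸ (M ⊔ orthoComp b M) //
            Submodule.mapQ (M ⊔ orthoComp b M) (M ⊔ orthoComp b M) σ hD y = -y} : ℤ) ^ 2 *
          (Matrix.of fun i j => b (vE i : Λ) (vE j : Λ)).det :=
  det_antiInvariants_identity_general b σ hσ hisom M hMσ hMnd hD hno2
end
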